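/- Let A be an n×n real symmetric positive definite matrix. If the Kantorovich function K(x) = (xᵀAx)(xᵀA⁻¹x) is convex on ℝⁿ, then the condition number κ(A) is at most 3 + 2√2. -/

import Mathlib

/-!
On the plane spanned by unit eigenvectors `u`, `v` for eigenvalues `M` and `m`, the Kantorovich
function is the even quartic `K(p u + q v) = p⁴ + q⁴ + (κ + κ⁻¹) p² q²` with `κ = M / m`.
Its second derivative at `u + v` in the direction `u - v` is `4 (6 - (κ + κ⁻¹))`, so convexity
forces `κ + κ⁻¹ ≤ 6`, i.e. `κ² - 6κ + 1 ≤ 0`, whose larger root is `3 + 2√2`.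
-/

open Matrix Filter Topology

variable {ι : Type*} [Fintype ι]

noncomputable def Matrix.kantorovich [DecidableEq ι] (A : Matrix ι ι ℝ) (x : ι → ℝ) : ℝ :=
  (x ⬝ᵥ (A *ᵥ x)) * (x ⬝ᵥ (A⁻¹ *ᵥ x))

theorem Matrix.inv_mulVec_of_mulVec_eq_smul {K : Type*} [Field K] [DecidableEq ι]
    {B : Matrix ι ι K} (hB : IsUnit B) {u : ι → K} {a : K} (ha : a ≠ 0)
    (h : B *ᵥ u = a • u) : B⁻¹ *ᵥ u = a⁻¹ • u := by
  let := hB.invertible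
  exact inv_mulVec_eq_vec (by rw [mulVec_smul, h, smul_smul, inv_mul_cancel₀ ha, one_smul])

theorem Matrix.dotProduct_mulVec_smul_add_smul {R : Type*} [CommRing R] (B : Matrix ι ι R)
    {u v : ι → R} {a b : R} (hu : u ⬝ᵥ u = 1) (hv : v ⬝ᵥ v = 1) (huv : u ⬝ᵥ v = 0)
    (hBu : B *ᵥ u = a • u) (hBv : B *ᵥ v = b • v) (p q : R) :
    (p • u + q • v) ⬝ᵥ (B *ᵥ (p • u + q • v)) = p ^ 2 * a + q ^ 2 * b := by
  have hvu : v ⬝ᵥ u = 0 := by rw [dotProduct_comm, huv]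
  simp only [mulVec_add, mulVec_smul, hBu, hBv, add_dotProduct, dotProduct_add, smul_dotProduct,
    dotProduct_smul, smul_eq_mul, hu, hv, huv, hvu]
  ring

theorem OrthonormalBasis.dotProduct_apply (b : OrthonormalBasis ι ℝ (EuclideanSpace ℝ ι))
    [DecidableEq ι] (i j : ι) : (⇑(b i) : ι → ℝ) ⬝ᵥ ⇑(b j) = if i = j then 1 else 0 := by
  rw [← orthonormal_iff_ite.mp b.orthonormal i j, EuclideanSpace.inner_eq_star_dotProduct,
    dotProduct_comm]
  simp

theorem Matrix.PosDef.kantorovich_smul_add_smul_eigenvectorBasis [DecidableEq ι]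
    {A : Matrix ι ι ℝ} (hA : A.PosDef) {i j : ι} (hij : i ≠ j) (p q : ℝ) :
    A.kantorovich (p • ⇑(hA.1.eigenvectorBasis i) + q • ⇑(hA.1.eigenvectorBasis j)) =
      p ^ 4 + q ^ 4 +
        (hA.1.eigenvalues i / hA.1.eigenvalues j + hA.1.eigenvalues j / hA.1.eigenvalues i) *
          (p ^ 2 * q ^ 2) := by
  have hM := (hA.eigenvalues_pos i).ne'
  have hm := (hA.eigenvalues_pos j).ne'
  have hu := hA.1.eigenvectorBasis.dotProduct_apply i i
  have hv := hA.1.eigenvectorBasis.dotProduct_apply j j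
  have huv := hA.1.eigenvectorBasis.dotProduct_apply i j
  simp only [if_neg hij] at hu hv huv
  have hAu := hA.1.mulVec_eigenvectorBasis i
  have hAv := hA.1.mulVec_eigenvectorBasis j
  rw [kantorovich, A.dotProduct_mulVec_smul_add_smul hu hv huv hAu hAv,
    A⁻¹.dotProduct_mulVec_smul_add_smul hu hv huv
      (inv_mulVec_of_mulVec_eq_smul hA.isUnit hM hAu) (inv_mulVec_of_mulVec_eq_smul hA.isUnit hm hAv)]
  field_simp
  ring

/-- The hypothesis is midpoint convexity of `p⁴ + q⁴ + c p²q²` between `(1 ± t, 1 ∓ t)`. -/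
theorem le_six_of_forall_midpoint_le {c : ℝ}
    (h : ∀ t : ℝ, 2 + c ≤ (1 + t) ^ 4 + (1 - t) ^ 4 + c * ((1 + t) ^ 2 * (1 - t) ^ 2)) :
    c ≤ 6 := by
  have hquot : ∀ t : ℝ, t ≠ 0 → 2 * c - 12 ≤ (c + 2) * t ^ 2 := by
    intro t ht
    refine le_of_mul_le_mul_right ?_ (pow_pos (sq_pos_of_ne_zero ht) 1)
    nlinarith [h t]
  have hlim : Tendsto (fun t : ℝ => (c + 2) * t ^ 2) (𝓝[≠] 0) (𝓝 0) :=
    tendsto_nhdsWithin_of_tendsto_nhds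
      (by simpa using (by fun_prop : Continuous fun t : ℝ => (c + 2) * t ^ 2).tendsto 0)
  have := ge_of_tendsto hlim (eventually_nhdsWithin_of_forall hquot)
  linarith

theorem Matrix.PosDef.eigenvalues_div_add_div_le_six_of_convexOn [DecidableEq ι]
    {A : Matrix ι ι ℝ} (hA : A.PosDef) (hconv : ConvexOn ℝ Set.univ A.kantorovich) (i j : ι) :
    hA.1.eigenvalues i / hA.1.eigenvalues j + hA.1.eigenvalues j / hA.1.eigenvalues i ≤ 6 := by
  rcases eq_or_ne i j with rfl | hij
  · rw [div_self (hA.eigenvalues_pos i).ne']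
    norm_num
  apply le_six_of_forall_midpoint_le
  intro t
  set u : ι → ℝ := ⇑(hA.1.eigenvectorBasis i)
  set v : ι → ℝ := ⇑(hA.1.eigenvectorBasis j)
  have hmid := hconv.2 (Set.mem_univ ((1 + t) • u + (1 - t) • v))
    (Set.mem_univ ((1 - t) • u + (1 + t) • v)) (by norm_num : (0 : ℝ) ≤ 1 / 2)
    (by norm_num : (0 : ℝ) ≤ 1 / 2) (by norm_num)
  have hK : ∀ p q : ℝ, A.kantorovich (p • u + q • v) = p ^ 4 + q ^ 4 +
      (hA.1.eigenvalues i / hA.1.eigenvalues j + hA.1.eigenvalues j / hA.1.eigenvalues i) *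
        (p ^ 2 * q ^ 2) :=
    hA.kantorovich_smul_add_smul_eigenvectorBasis hij
  rw [show (1 / 2 : ℝ) • ((1 + t) • u + (1 - t) • v) + (1 / 2 : ℝ) • ((1 - t) • u + (1 + t) • v)
      = (1 : ℝ) • u + (1 : ℝ) • v by module] at hmid
  simp only [hK, smul_eq_mul] at hmid
  linarith

theorem le_three_add_two_mul_sqrt_two_of_add_inv_le_six {κ : ℝ} (hκ : 0 < κ)
    (h : κ + κ⁻¹ ≤ 6) : κ ≤ 3 + 2 * Real.sqrt 2 := by
  have hquad : κ ^ 2 - 6 * κ + 1 ≤ 0 := by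
    have := mul_le_mul_of_nonneg_left h hκ.le
    rw [mul_add, mul_inv_cancel₀ hκ.ne'] at this
    nlinarith
  have hsqrt : Real.sqrt 2 ^ 2 = 2 := Real.sq_sqrt zero_le_two
  nlinarith [Real.sqrt_nonneg 2, sq_nonneg (κ - 3 - 2 * Real.sqrt 2)]

theorem condNumber_le_of_kantorovich_convex {n : ℕ} (hn : 0 < n)
    (A : Matrix (Fin n) (Fin n) ℝ) (hA : A.PosDef)
    (hconv : ConvexOn ℝ Set.univ
      (fun x : Fin n → ℝ => (x ⬝ᵥ (A *ᵥ x)) * (x ⬝ᵥ (A⁻¹ *ᵥ x)))) :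
    (⨆ i, hA.1.eigenvalues i) / (⨅ i, hA.1.eigenvalues i) ≤ 3 + 2 * Real.sqrt 2 := by
  have : Nonempty (Fin n) := Fin.pos_iff_nonempty.mp hn
  obtain ⟨i, hi⟩ := exists_eq_ciSup_of_finite (f := hA.1.eigenvalues)
  obtain ⟨j, hj⟩ := exists_eq_ciInf_of_finite (f := hA.1.eigenvalues)
  rw [← hi, ← hj]
  apply le_three_add_two_mul_sqrt_two_of_add_inv_le_six
    (div_pos (hA.eigenvalues_pos i) (hA.eigenvalues_pos j))
  rw [inv_div]
  exact hA.eigenvalues_div_add_div_le_six_of_convexOn hconv i j
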